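/- arXiv:2003.03966 — 2 statements merged into one kernel-verified Lean document; each statement's English description precedes it below -/
import Mathlib

section
/- Let G be a finite simple graph on vertex set {1,…,n} such that the ordering 1,2,…,n is a perfect elimination ordering of G, i.e., for every i the set { j > i : {i,j} ∈ E(G) } is a clique of G. Let I = I(G^c) be the edge ideal of the complement of G. Then I has linear quotients with respect to the lexicographic order on G(I) induced by x_1 > x_2 > … > x_n: listing the generators x_i x_j (i < j) so that x_i x_j comes before x_k x_l (k < l) whenever i < k, or i = k and j < l, every generator's colon ideal by the set of earlier generators is generated by variables. -/
/-!
Colon ideals of monomial ideals by a monomial are again monomial, so it suffices to show that a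
monomial `m` satisfies "`m x_i x_j` is divisible by an earlier generator `x_k x_l`" exactly when
`m` is divisible by one of the variables `x_t` with `t < i` and `t` not adjacent to `i` or not
adjacent to `j`, or `i < t < j` and `t` not adjacent to `i`. The only step that needs the perfect
elimination ordering is an earlier generator `x_k x_l` with `k < i`: if `k` were adjacent to both
`i` and `j`, the higher neighbours `i, j` of `k` would be adjacent.
-/

open MvPolynomial

theorem Finsupp.single_add_single_le_iff {σ : Type*} {a b : σ} (hab : a ≠ b) (m : σ →₀ ℕ) :
    Finsupp.single a 1 + Finsupp.single b 1 ≤ m ↔ 1 ≤ m a ∧ 1 ≤ m b := by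
  classical
  simp only [Finsupp.le_def, Finsupp.add_apply, Finsupp.single_apply]
  refine ⟨fun h => ⟨?_, ?_⟩, fun ⟨ha, hb⟩ t => ?_⟩
  · simpa [hab.symm] using h a
  · simpa [hab] using h b
  · split_ifs <;> grind

namespace MvPolynomial

variable {σ R : Type*} [CommSemiring R]

theorem support_mul_monomial_one (p : MvPolynomial σ R) (s : σ →₀ ℕ) :
    (p * monomial s (1 : R)).support = p.support.map (addRightEmbedding s) :=
  AddMonoidAlgebra.support_coeff_mul_single p 1 (by simp) s

theorem mem_colon_span_monomial_image_iff {S : Set (σ →₀ ℕ)} {d : σ →₀ ℕ}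
    {f : MvPolynomial σ R} :
    f ∈ (Ideal.span ((fun s => monomial s (1 : R)) '' S)).colon
        (Ideal.span {monomial d (1 : R)}) ↔
      ∀ m ∈ f.support, ∃ s ∈ S, s ≤ m + d := by
  simp [mem_ideal_span_monomial_image, support_mul_monomial_one]

theorem colon_span_monomial_image_eq_span_X_image {S : Set (σ →₀ ℕ)} {d : σ →₀ ℕ} {T : Set σ}
    (h : ∀ m : σ →₀ ℕ, (∃ s ∈ S, s ≤ m + d) ↔ ∃ t ∈ T, m t ≠ 0) :
    (Ideal.span ((fun s => monomial s (1 : R)) '' S)).colon (Ideal.span {monomial d (1 : R)}) =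
      Ideal.span (X '' T) := by
  ext f
  simp only [mem_colon_span_monomial_image_iff, mem_ideal_span_X_image, h]

end MvPolynomial

namespace SimpleGraph

open Finsupp

variable {α : Type*} [LinearOrder α] (G : SimpleGraph α)

def lexColonVars (i j : α) : Set α :=
  {t | (t < i ∧ ¬ G.Adj t i) ∨ (t < i ∧ ¬ G.Adj t j) ∨ (i < t ∧ t < j ∧ ¬ G.Adj i t)}

variable {G}

theorem exists_lexEarlier_nonEdge_le_iff
    (peo : ∀ i j k : α, i < j → i < k → G.Adj i j → G.Adj i k → j ≠ k → G.Adj j k)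
    {i j : α} (hij : i < j) (hadj : ¬ G.Adj i j) (m : α →₀ ℕ) :
    (∃ k l, k < l ∧ ¬ G.Adj k l ∧ (k < i ∨ (k = i ∧ l < j)) ∧
        single k 1 + single l 1 ≤ m + (single i 1 + single j 1)) ↔
      ∃ t ∈ G.lexColonVars i j, m t ≠ 0 := by
  classical
  set D : α →₀ ℕ := single i 1 + single j 1
  have hi : 1 ≤ (m + D) i := by simp only [D, Finsupp.add_apply, single_eq_same]; omega
  have hj : 1 ≤ (m + D) j := by simp only [D, Finsupp.add_apply, single_eq_same]; omega
  have hD : ∀ t, t ≠ i → t ≠ j → (m + D) t = m t := by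
    intro t hti htj
    simp [D, hti.symm, htj.symm]
  constructor
  · rintro ⟨k, l, hkl, hkl', hlex, hle⟩
    rw [single_add_single_le_iff hkl.ne] at hle
    rcases hlex with hki | ⟨rfl, hlj⟩
    · refine ⟨k, ?_, ?_⟩
      · by_contra hk
        simp only [lexColonVars, Set.mem_ofPred_eq, hki, true_and, not_or, not_not] at hk
        exact hadj (peo k i j hki (hki.trans hij) hk.1 hk.2.1 hij.ne)
      · rw [hD k hki.ne (hki.trans hij).ne] at hle
        omega
    · refine ⟨l, Or.inr (Or.inr ⟨hkl, hlj, hkl'⟩), ?_⟩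
      rw [hD l hkl.ne' hlj.ne] at hle
      omega
  · rintro ⟨t, ht, hmt⟩
    have htm : 1 ≤ (m + D) t := by
      rw [Finsupp.add_apply]
      omega
    rcases ht with ⟨hti, htadj⟩ | ⟨hti, htadj⟩ | ⟨hit, htj, hitadj⟩
    · exact ⟨t, i, hti, htadj, Or.inl hti, (single_add_single_le_iff hti.ne _).2 ⟨htm, hi⟩⟩
    · exact ⟨t, j, hti.trans hij, htadj, Or.inl hti,
        (single_add_single_le_iff (hti.trans hij).ne _).2 ⟨htm, hj⟩⟩
    · exact ⟨i, t, hit, hitadj, Or.inr ⟨rfl, htj⟩,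
        (single_add_single_le_iff hit.ne _).2 ⟨hi, htm⟩⟩

end SimpleGraph

/-- if `1, 2, …, n` is a perfect elimination ordering of the finite simple graph `G`
(for every `i` the higher-indexed neighbours of `i` form a clique), then the edge ideal
`I = I(G^c)` of the complement has linear quotients with respect to the lexicographic order on its
generators `x_i x_j` induced by `x_1 > x_2 > ⋯ > x_n`: for every generator, the colon ideal of the
earlier generators by it is generated by a subset of the variables. -/
theorem stmt_8 {K : Type*} [Field K] {n : ℕ} (G : SimpleGraph (Fin n))
    (peo : ∀ i j k : Fin n, i < j → i < k → G.Adj i j → G.Adj i k → j ≠ k → G.Adj j k) :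
    ∀ i j : Fin n, i < j → ¬ G.Adj i j →
      ∃ T : Set (Fin n),
        Submodule.colon
          (Ideal.span {p : MvPolynomial (Fin n) K | ∃ k l : Fin n, k < l ∧ ¬ G.Adj k l ∧
            (k < i ∨ (k = i ∧ l < j)) ∧
            p = monomial (Finsupp.single k 1 + Finsupp.single l 1) 1})
          (Ideal.span {(monomial (Finsupp.single i 1 + Finsupp.single j 1) (1 : K))})
        = Ideal.span (MvPolynomial.X '' T) := by
  intro i j hij hadj
  refine ⟨G.lexColonVars i j, ?_⟩
  rw [show {p : MvPolynomial (Fin n) K | _} = (fun s => monomial s 1) '' {d | ∃ k l : Fin n,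
      k < l ∧ ¬ G.Adj k l ∧ (k < i ∨ (k = i ∧ l < j)) ∧ d = Finsupp.single k 1 + Finsupp.single l 1}
    by ext; simp [eq_comm, and_assoc]]
  refine colon_span_monomial_image_eq_span_X_image fun m => ?_
  simpa [and_assoc] using SimpleGraph.exists_lexEarlier_nonEdge_le_iff peo hij hadj m
end

section
/- Let n be a positive integer and k ≥ 1 an integer, and let J_{n,k} ⊆ K[x_1,…,x_n] be the ideal generated by all squarefree monomials x_{i_1} x_{i_2} ··· x_{i_{k+2}} with 1 ≤ i_1 < i_2 < … < i_{k+2} ≤ n for which there exists t < k+2 with i_{t+1} − i_t ≥ 2. Then J_{n,k} has linear quotients with respect to the lexicographic order induced by x_1 > x_2 > … > x_n: for each generator v, the colon ideal ( u ∈ G(J_{n,k}) : u >_lex v ) : v is generated by variables. (J_{n,k} is the k-th homological shift ideal HS_k(I(P_n^c)) of the edge ideal of the complement of the path P_n: 1–2–…–n.) -/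
/-!
Let `q` be the first index at which a lex-larger generator `x_U` differs from `x_T`; then
`q ∈ U \ T`. The variable `x_q` already lies in the colon ideal: if `T` has an element `t > q`
that is not its maximum, then `(T ∪ {q}) \ {t}` is a lex-larger generator, with a gap around `t`;
otherwise `T` has exactly one element above `q`, and exchanging it for `q` gives `U` itself.
Hence every monomial generator of the colon ideal is divisible by a variable in it.
-/

open MvPolynomial

/-- `T = {i_1 < ⋯ < i_r}` has a gap: some consecutive pair of elements of `T` differs by ≥ 2,
i.e. there are `a, b ∈ T` with `b` the successor of `a` in `T` and `b - a ≥ 2`. -/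
def HasGap {n : ℕ} (T : Finset (Fin n)) : Prop :=
  ∃ a ∈ T, ∃ b ∈ T, (a : ℕ) + 2 ≤ (b : ℕ) ∧ ∀ x ∈ T, a < x → b ≤ x

/-- The exponent vector of the squarefree monomial `x_T = ∏_{i ∈ T} x_i`. -/
noncomputable def sqfree {n : ℕ} (T : Finset (Fin n)) : Fin n →₀ ℕ :=
  ∑ i ∈ T, Finsupp.single i 1

/-- `a >_lex b` for the lexicographic order on monomials induced by `x_1 > x_2 > ⋯ > x_n`. -/
def lexGT {n : ℕ} (a b : Fin n →₀ ℕ) : Prop :=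
  ∃ i : Fin n, (∀ j : Fin n, j < i → a j = b j) ∧ b i < a i

namespace MvPolynomial

variable {σ R : Type*} [CommSemiring R]

/-- `t i < s i` says that `x_i` divides the generator `x^(s - t)` of the colon ideal. -/
theorem colon_span_monomial_eq_span_X {A : Set (σ →₀ ℕ)} {t : σ →₀ ℕ} {S : Set σ}
    (h_dvd : ∀ s ∈ A, ∃ i ∈ S, t i < s i)
    (h_mem : ∀ i ∈ S, ∃ s ∈ A, s ≤ Finsupp.single i 1 + t) :
    (Ideal.span ((fun s => monomial s (1 : R)) '' A)).colon (Ideal.span {monomial t (1 : R)}) =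
      Ideal.span (X '' S) := by
  apply le_antisymm
  · intro f hf
    rw [Ideal.mem_colon_span_singleton, mem_ideal_span_monomial_image] at hf
    rw [mem_ideal_span_X_image]
    intro m hm
    have hmt : m + t ∈ (f * monomial t 1).support := by
      rwa [mem_support_iff, coeff_mul_monomial, mul_one, ← mem_support_iff]
    obtain ⟨s, hsA, hs⟩ := hf _ hmt
    obtain ⟨i, hiS, hti⟩ := h_dvd s hsA
    have := hs i
    exact ⟨i, hiS, by simp only [Finsupp.add_apply] at this; omega⟩
  · rw [Ideal.span_le]
    rintro _ ⟨i, hiS, rfl⟩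
    rw [SetLike.mem_coe, Ideal.mem_colon_span_singleton, X, monomial_mul, one_mul,
      mem_ideal_span_monomial_image]
    intro m hm
    rw [Finset.mem_singleton.1 (support_monomial_subset hm)]
    exact h_mem i hiS

end MvPolynomial

variable {n : ℕ}

lemma sqfree_apply (T : Finset (Fin n)) (j : Fin n) :
    sqfree T j = if j ∈ T then 1 else 0 := by
  simp only [sqfree, Finsupp.finsetSum_apply, Finsupp.single_apply]
  rw [Finset.sum_ite_eq' T j (fun _ => 1)]

lemma sqfree_lt_sqfree_iff {T U : Finset (Fin n)} {j : Fin n} :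
    sqfree T j < sqfree U j ↔ j ∈ U ∧ j ∉ T := by
  simp only [sqfree_apply]
  split_ifs <;> simp_all

lemma sqfree_le_single_add_of_subset_insert {T W : Finset (Fin n)} {i : Fin n}
    (h : W ⊆ insert i T) : sqfree W ≤ Finsupp.single i 1 + sqfree T := by
  intro j
  have := @h j
  simp only [Finsupp.add_apply, Finsupp.single_apply, sqfree_apply, Finset.mem_insert] at this ⊢
  split_ifs <;> simp_all

lemma lexGT_sqfree_iff {U T : Finset (Fin n)} :
    lexGT (sqfree U) (sqfree T) ↔ ∃ q ∈ U, q ∉ T ∧ ∀ j < q, (j ∈ U ↔ j ∈ T) := by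
  have hagree (j : Fin n) : sqfree U j = sqfree T j ↔ (j ∈ U ↔ j ∈ T) := by
    simp only [sqfree_apply]
    split_ifs <;> simp_all
  simp only [lexGT, sqfree_lt_sqfree_iff, hagree]
  exact exists_congr fun q => by tauto

/-- The predecessor and the successor of `t` in `X` are adjacent in `X.erase t`. -/
lemma hasGap_erase {X : Finset (Fin n)} {a t b : Fin n} (ha : a ∈ X) (hb : b ∈ X)
    (hat : a < t) (htb : t < b) : HasGap (X.erase t) := by
  have hbelow : (X.filter (· < t)).Nonempty := ⟨a, Finset.mem_filter.2 ⟨ha, hat⟩⟩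
  have habove : (X.filter (t < ·)).Nonempty := ⟨b, Finset.mem_filter.2 ⟨hb, htb⟩⟩
  obtain ⟨hpX, hpt⟩ := Finset.mem_filter.1 (Finset.max'_mem _ hbelow)
  obtain ⟨hsX, hts⟩ := Finset.mem_filter.1 (Finset.min'_mem _ habove)
  refine ⟨_, Finset.mem_erase.2 ⟨hpt.ne, hpX⟩, _, Finset.mem_erase.2 ⟨hts.ne', hsX⟩,
    by have := Fin.lt_def.1 hpt; have := Fin.lt_def.1 hts; omega, fun x hx hpx => ?_⟩
  obtain ⟨hxt, hxX⟩ := Finset.mem_erase.1 hx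
  rcases lt_or_gt_of_ne hxt with hxt | htx
  · exact absurd (Finset.le_max' _ x (Finset.mem_filter.2 ⟨hxX, hxt⟩)) hpx.not_ge
  · exact Finset.min'_le _ x (Finset.mem_filter.2 ⟨hxX, htx⟩)

section Exchange

variable {T : Finset (Fin n)} {q t : Fin n}

lemma card_insert_erase (hqT : q ∉ T) (ht : t ∈ T) : ((insert q T).erase t).card = T.card := by
  rw [Finset.card_erase_of_mem (Finset.mem_insert_of_mem ht), Finset.card_insert_of_notMem hqT,
    Nat.add_sub_cancel]

lemma lexGT_sqfree_insert_erase (hqT : q ∉ T) (hqt : q < t) :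
    lexGT (sqfree ((insert q T).erase t)) (sqfree T) := by
  refine lexGT_sqfree_iff.2 ⟨q, Finset.mem_erase.2 ⟨hqt.ne, Finset.mem_insert_self _ _⟩, hqT,
    fun j hj => ?_⟩
  simp [hj.ne, (hj.trans hqt).ne]

end Exchange

/-- The exchange property behind the linear quotients: for a lex-larger generator `x_U` there is
a variable `x_i`, dividing `x_U / gcd(x_U, x_T)`, with `x_i x_T` a multiple of a lex-larger
generator. -/
theorem exists_hasGap_lexGT_subset_insert {T U : Finset (Fin n)} (hcard : U.card = T.card)
    (hU : HasGap U) (hUT : lexGT (sqfree U) (sqfree T)) :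
    ∃ i ∈ U, i ∉ T ∧ ∃ W : Finset (Fin n), W.card = T.card ∧ HasGap W ∧
      lexGT (sqfree W) (sqfree T) ∧ W ⊆ insert i T := by
  obtain ⟨q, hqU, hqT, hagree⟩ := lexGT_sqfree_iff.1 hUT
  refine ⟨q, hqU, hqT, ?_⟩
  by_cases h_two_above : ∃ t ∈ T, q < t ∧ ∃ t' ∈ T, t < t'
  · obtain ⟨t, ht, hqt, t', ht', htt'⟩ := h_two_above
    exact ⟨(insert q T).erase t, card_insert_erase hqT ht,
      hasGap_erase (Finset.mem_insert_self q T) (Finset.mem_insert_of_mem ht') hqt htt',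
      lexGT_sqfree_insert_erase hqT hqt, Finset.erase_subset _ _⟩
  push Not at h_two_above
  have hbelow : ∀ x ∈ T, x < q → x ∈ U := fun x hx hxq => (hagree x hxq).2 hx
  obtain ⟨t, ht, hqt⟩ : ∃ t ∈ T, q < t := by
    by_contra! h
    have hTU : T ⊆ U := fun x hx => hbelow x hx ((h x hx).lt_of_ne (ne_of_mem_of_not_mem hx hqT))
    exact hqT (Finset.eq_of_subset_of_card_le hTU hcard.le ▸ hqU)
  have hWU : (insert q T).erase t ⊆ U := by
    intro x hx
    obtain ⟨hxt, hxqT⟩ := Finset.mem_erase.1 hx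
    rcases Finset.mem_insert.1 hxqT with rfl | hxT
    · exact hqU
    refine hbelow x hxT (lt_of_not_ge fun hqx => hxt ?_)
    have hqx := hqx.lt_of_ne (ne_of_mem_of_not_mem hxT hqT).symm
    exact le_antisymm (h_two_above t ht hqt x hxT) (h_two_above x hxT hqx t ht)
  have hU_eq := Finset.eq_of_subset_of_card_le hWU (by rw [card_insert_erase hqT ht, hcard])
  exact ⟨U, hcard, hU, hUT, hU_eq ▸ Finset.erase_subset _ _⟩

theorem stmt_11_general {K : Type*} [Field K] (n k : ℕ) :
    ∀ T : Finset (Fin n), T.card = k + 2 → HasGap T →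
      ∃ S : Set (Fin n),
        Submodule.colon
          (Ideal.span {p : MvPolynomial (Fin n) K | ∃ U : Finset (Fin n),
            U.card = k + 2 ∧ HasGap U ∧ lexGT (sqfree U) (sqfree T) ∧
            p = monomial (sqfree U) 1})
          (Ideal.span {(monomial (sqfree T) (1 : K))})
        = Ideal.span (MvPolynomial.X '' S) := by
  intro T hT _
  set A := {s | ∃ U : Finset (Fin n), U.card = k + 2 ∧ HasGap U ∧
    lexGT (sqfree U) (sqfree T) ∧ s = sqfree U}
  have hgens : {p : MvPolynomial (Fin n) K | ∃ U : Finset (Fin n), U.card = k + 2 ∧ HasGap U ∧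
      lexGT (sqfree U) (sqfree T) ∧ p = monomial (sqfree U) 1} =
      (fun s => monomial s 1) '' A := by
    ext p
    simp only [A, Set.mem_ofPred_eq, Set.mem_image]
    grind
  refine ⟨{i | ∃ W : Finset (Fin n), W.card = k + 2 ∧ HasGap W ∧
    lexGT (sqfree W) (sqfree T) ∧ W ⊆ insert i T}, ?_⟩
  rw [hgens]
  refine colon_span_monomial_eq_span_X ?_ ?_
  · rintro _ ⟨U, hU, hgU, hUT, rfl⟩
    obtain ⟨i, hiU, hiT, hW⟩ := exists_hasGap_lexGT_subset_insert (hU.trans hT.symm) hgU hUT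
    exact ⟨i, hT ▸ hW, sqfree_lt_sqfree_iff.2 ⟨hiU, hiT⟩⟩
  · rintro i ⟨W, hW, hgW, hWT, hWi⟩
    exact ⟨sqfree W, ⟨W, hW, hgW, hWT, rfl⟩, sqfree_le_single_add_of_subset_insert hWi⟩

/-- for `k ≥ 1`, the ideal `J_{n,k}` generated by all squarefree monomials
`x_{i_1} ⋯ x_{i_{k+2}}` with `i_1 < ⋯ < i_{k+2}` and `i_{t+1} - i_t ≥ 2` for some `t < k+2`
(which is `HS_k(I(P_n^c))`) has linear quotients with respect to the lexicographic order induced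
by `x_1 > ⋯ > x_n`: for each generator `v`, the colon ideal of the lex-greater generators by `v`
is generated by variables. -/
theorem stmt_11 {K : Type*} [Field K] (n k : ℕ) (hn : 0 < n) (hk : 1 ≤ k) :
    ∀ T : Finset (Fin n), T.card = k + 2 → HasGap T →
      ∃ S : Set (Fin n),
        Submodule.colon
          (Ideal.span {p : MvPolynomial (Fin n) K | ∃ U : Finset (Fin n),
            U.card = k + 2 ∧ HasGap U ∧ lexGT (sqfree U) (sqfree T) ∧
            p = monomial (sqfree U) 1})
          (Ideal.span {(monomial (sqfree T) (1 : K))})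
        = Ideal.span (MvPolynomial.X '' S) :=
  stmt_11_general n k
end
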